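/- Let q ≥ 2, k ≥ 1, let x ∈ Σ_q^n with n ≥ k, and let i be an integer with 0 ≤ i ≤ n − k. Then φ̂(T_{i,k}(x)) = φ̂(x), and φ̄(T_{i,k}(x)) is the string of length n obtained from φ̄(x) by inserting the block 0^k immediately after position i. Consequently, μ(φ̄(T_{i,k}(x))) = μ(φ̄(x)) and rt(T_{i,k}(x)) = rt(x); hence for every descendant x' ∈ D_k^{*(0)}(x) of x by exact k-TDs only, φ̂(x') = φ̂(x), μ(φ̄(x')) = μ(φ̄(x)) and rt(x') = rt(x). -/

import Mathlib

open List

namespace NoisyDup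

variable {q : ℕ}

/-- Tandem duplication `T_{i,k}`: duplicates the length-`k` substring starting
after position `i` (0-based index `i`), if it exists. -/
def dup (i k : ℕ) (x : List (ZMod q)) : List (ZMod q) :=
  if i + k ≤ x.length then x.take i ++ (x.drop i).take k ++ x.drop i else x

/-- Add `a` (mod `q`) to the entry at 0-based index `i`. -/
def addAt (x : List (ZMod q)) (i : ℕ) (a : ZMod q) : List (ZMod q) :=
  x.set i (x.getD i 0 + a)

/-- One exact tandem duplication of length `k`. -/
def ExactStep (k : ℕ) (x y : List (ZMod q)) : Prop :=
  ∃ i, i + k ≤ x.length ∧ y = dup i k x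

/-- One noisy duplication of length `k`: an exact duplication followed by adding
some `a ≠ 0` to one symbol of the inserted copy (positions are 1-indexed). -/
def NoisyStep (k : ℕ) (x y : List (ZMod q)) : Prop :=
  ∃ (i : ℕ) (a : ZMod q) (j : ℕ), i + k ≤ x.length ∧ a ≠ 0 ∧
    i + k + 1 ≤ j ∧ j ≤ i + 2 * k ∧ y = addAt (dup i k x) (j - 1) a

/-- Descendants by exact duplications only: `D_k^{*(0)}`. -/
def ExactDesc (k : ℕ) (x y : List (ZMod q)) : Prop :=
  Relation.ReflTransGen (ExactStep k) x y

/-- The descendant cone `D_k^{*(≤1)}`: any number of exact duplications and at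
most one noisy duplication. -/
def descCone (k : ℕ) (x : List (ZMod q)) : Set (List (ZMod q)) :=
  {y | ExactDesc k x y ∨ ∃ u v, ExactDesc k x u ∧ NoisyStep k u v ∧ ExactDesc k v y}

/-- `φ̂(x)`: the first `k` symbols. -/
def hatPhi (k : ℕ) (x : List (ZMod q)) : List (ZMod q) := x.take k

/-- `φ̄(x)_i = x_{i+k} - x_i` (1-indexed), a string of length `|x| - k`. -/
def barPhi (k : ℕ) (x : List (ZMod q)) : List (ZMod q) :=
  (List.range (x.length - k)).map fun i => x.getD (i + k) 0 - x.getD i 0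

/-- Auxiliary for `mu`: `cnt` counts the current run of zeros. -/
def muAux (k : ℕ) : ℕ → List (ZMod q) → List (ZMod q)
  | cnt, [] => List.replicate (cnt % k) 0
  | cnt, a :: t =>
      if a = 0 then muAux k (cnt + 1) t
      else List.replicate (cnt % k) 0 ++ a :: muAux k 0 t

/-- `μ(z)`: reduce the length of every maximal run of zeros modulo `k`. -/
def mu (k : ℕ) (z : List (ZMod q)) : List (ZMod q) := muAux k 0 z

/-- `x` contains a tandem repeat of length `k`. -/
def HasRepeat (k : ℕ) (x : List (ZMod q)) : Prop :=
  ∃ i, i + 2 * k ≤ x.length ∧ (x.drop i).take k = (x.drop (i + k)).take k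

/-- `x` is irreducible: it contains no tandem repeat of length `k`. -/
def IsIrreducible (k : ℕ) (x : List (ZMod q)) : Prop := ¬ HasRepeat k x

/-- The duplication root: the (unique) irreducible ancestor of `x` under exact
duplications of length `k`. -/
noncomputable def rt (k : ℕ) (x : List (ZMod q)) : List (ZMod q) :=
  haveI := Classical.propDecidable (∃ z, IsIrreducible k z ∧ ExactDesc k z x)
  if h : ∃ z, IsIrreducible k z ∧ ExactDesc k z x then h.choose else x

/-- The set of irreducible strings of length `n` over `Σ_q`. -/
def Irr (k n : ℕ) : Set (List (ZMod q)) := {x | x.length = n ∧ IsIrreducible k x}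

/-- `ins_k(u, j)`: the subsequence of entries in (1-indexed) positions congruent
to `j` modulo `k`. -/
def splitk (k j : ℕ) (u : List (ZMod q)) : List (ZMod q) :=
  (((List.range u.length).zip u).filter fun p => p.1 % k == j - 1).map Prod.snd

/-- The interleaving `inl(u) = ins_k(u,1) ⋯ ins_k(u,k)`. -/
def inl (k : ℕ) (u : List (ZMod q)) : List (ZMod q) :=
  ((List.range k).map fun j => splitk k (j + 1) u).flatten

/-- The indicator `Γ(z)` of the nonzero entries of `z`. -/
def gamma (z : List (ZMod q)) : List Bool := z.map fun a => decide (a ≠ 0)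

/-- The cumulative-sum map (mod `q`). -/
def cusum (z : List (ZMod q)) : List (ZMod q) :=
  (List.range z.length).map fun i => (z.take (i + 1)).sum

/-- Hamming weight of a binary string. -/
def wt (u : List Bool) : ℕ := u.count true

/-- The VT syndrome `Σ i·u_i` (1-indexed). -/
def vtSum (u : List Bool) : ℕ := (((List.range u.length).zip u).map fun p => if p.2 then p.1 + 1 else 0).sum

/-- The (variable-length) Varshamov–Tenengolts code. -/
def CVT (α m : ℕ) : Set (List Bool) := {z | z.length ≤ m - 1 ∧ vtSum z % m = α}

/-- `Σ_{i=1}^{|u|} i · (u_1 + ⋯ + u_i)`. -/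
def wSum (u : List Bool) : ℕ :=
  ((List.range u.length).map fun i => (i + 1) * wt (u.take (i + 1))).sum

/-- Tenengolts' binary map `ζ`. -/
def zeta (z : List (ZMod q)) : List Bool :=
  ((List.range z.length).zip z).map fun p => if p.1 = 0 then true else decide ((z.getD (p.1 - 1) 0).val ≤ p.2.val)

/-- `Σ_{i=1}^{|z|} (i-1)·ζ(z)_i`. -/
def tqSum (z : List (ZMod q)) : ℕ := (((List.range (zeta z).length).zip (zeta z)).map fun p => if p.2 then p.1 else 0).sum

/-- Tenengolts' (variable-length) `q`-ary single-indel-correcting code. -/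
def CTq (α β m : ℕ) : Set (List (ZMod q)) :=
  {z | z.length ≤ m ∧ (z.map ZMod.val).sum % q = α ∧ tqSum z % m = β}

/-- The length of `s_j = Γ(ins_k(μ,j))` for a codeword of length `n`
(the number of positions in `{1,…,n-k}` congruent to `j` mod `k`). -/
def sLen (k n j : ℕ) : ℕ := (List.range (n - k)).countP fun i => i % k == j - 1

/-- Admissibility of the parameters of the code `C_nd`. -/
def Admissible (q k n : ℕ) (a c : ℕ → ℕ) (b a1 a2 a3 a4 b1 b2 b3 b4 : ℕ) : Prop :=
  (∀ j ∈ Finset.Icc 1 k, a j ≤ 2 * (sLen k n j + 1)) ∧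
  (∀ j ∈ Finset.Icc 1 k, c j ≤ 2 * sLen k n j) ∧
  b ≤ 4 ∧ a1 ≤ q - 1 ∧ a2 ≤ q - 1 ∧ a3 ≤ q - 1 ∧ a4 ≤ q - 1 ∧
  b1 ≤ (n - k) / 2 ∧ b2 ≤ (n - k) / 2 ∧ b3 ≤ n - k - 1 ∧ b4 ≤ n - k - 1

/-- The code `C_nd` for the noisy duplication channel. -/
def Cnd (k n : ℕ) (a c : ℕ → ℕ) (b a1 a2 a3 a4 b1 b2 b3 b4 : ℕ) : Set (List (ZMod q)) :=
  {x | x.length = n ∧ IsIrreducible k x ∧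
    (∀ j ∈ Finset.Icc 1 k,
        gamma (splitk k j (mu k (barPhi k x))) ∈
          CVT (a j) (2 * (gamma (splitk k j (mu k (barPhi k x)))).length + 3)) ∧
    (∀ j ∈ Finset.Icc 1 k,
        wSum (gamma (splitk k j (mu k (barPhi k x)))) %
          (2 * (gamma (splitk k j (mu k (barPhi k x)))).length + 1) = c j) ∧
    ((Finset.Icc 1 k).sum fun j => wt (gamma (splitk k j (mu k (barPhi k x))))) % 5 = b ∧
    splitk 2 1 (inl k (mu k (barPhi k x))) ∈ CTq a1 b1 ((n - k + 1) / 2) ∧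
    splitk 2 2 (inl k (mu k (barPhi k x))) ∈ CTq a2 b2 ((n - k + 1) / 2) ∧
    cusum (inl k (mu k (barPhi k x))) ∈ CTq a3 b3 (n - k) ∧
    inl k (mu k (barPhi k x)) ∈ CTq a4 b4 (n - k)}

/-- `w` is obtained from `u` by deleting one occurrence of the symbol `b`. -/
def delSymb (u w : List (ZMod q)) (b : ZMod q) : Prop :=
  ∃ i, i < u.length ∧ u.getD i 0 = b ∧ w = u.eraseIdx i

/-- `w` is obtained from `u` by inserting the symbol `b` at some position. -/
def insOne (u w : List (ZMod q)) (b : ZMod q) : Prop :=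
  ∃ i, i ≤ u.length ∧ w = u.take i ++ b :: u.drop i

/-- `w` is obtained from `u` by inserting the adjacent pair `b, c`. -/
def insPair (u w : List (ZMod q)) (b c : ZMod q) : Prop :=
  ∃ i, i ≤ u.length ∧ w = u.take i ++ b :: c :: u.drop i

/-- `w` is obtained from `u` by inserting two `0`s separated by exactly one
(unchanged) symbol of `u`. -/
def insSpread0 (u w : List (ZMod q)) : Prop :=
  ∃ i, i < u.length ∧ w = u.take i ++ 0 :: u.getD i 0 :: 0 :: u.drop (i + 1)

/-- `w` is obtained from `u` by inserting a nonzero `a` and replacing the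
symbol `c` immediately following the insertion point by `c - a`. -/
def insSub (u w : List (ZMod q)) : Prop :=
  ∃ a : ZMod q, a ≠ 0 ∧ ∃ i, i < u.length ∧
    w = u.take i ++ a :: (u.getD i 0 - a) :: u.drop (i + 1)

/-- `w` is obtained from `u` by replacing a single symbol `0` by a nonzero symbol. -/
def subOne (u w : List (ZMod q)) : Prop :=
  ∃ i, i < u.length ∧ u.getD i 0 = 0 ∧ ∃ a : ZMod q, a ≠ 0 ∧ w = u.set i a

/-- `w` is obtained from `u` by replacing two adjacent symbols `0, c` by
`a, c - a` for some nonzero `a`. -/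
def subTwo (u w : List (ZMod q)) : Prop :=
  ∃ i, i + 1 < u.length ∧ u.getD i 0 = 0 ∧ ∃ a : ZMod q, a ≠ 0 ∧
    w = u.take i ++ a :: (u.getD (i + 1) 0 - a) :: u.drop (i + 2)

/-- `w` is obtained from `u` by swapping an adjacent pair `b, 0` (with `b ≠ 0`)
into `0, b`. -/
def swapPair (u w : List (ZMod q)) : Prop :=
  ∃ i, i + 1 < u.length ∧ u.getD i 0 ≠ 0 ∧ u.getD (i + 1) 0 = 0 ∧
    w = u.take i ++ 0 :: u.getD i 0 :: u.drop (i + 2)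

/-- `w` is obtained from `u` by deleting a single symbol. -/
def delQ (u w : List (ZMod q)) : Prop := ∃ i, i < u.length ∧ w = u.eraseIdx i

/-- `w` is obtained from `u` by inserting a single symbol. -/
def insQ (u w : List (ZMod q)) : Prop :=
  ∃ (i : ℕ) (b : ZMod q), i ≤ u.length ∧ w = u.take i ++ b :: u.drop i


/-!
A duplication `x = uvw ↦ uvvw` with `|v| = k` leaves the first `k` symbols alone, and in
the difference string `φ̄` (entries `x_{j+k} - x_j`) it inserts exactly `k` zeros, since
each new position is compared with its own copy; `μ` forgets such a block. Conversely, a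
zero run of length `k` in `φ̄ z` is a tandem repeat in `z`, so for irreducible `z` we have
`μ (φ̄ z) = φ̄ z`, and `z` is determined by `φ̂ z` and `φ̄ z`. Hence two irreducible ancestors
of the same string coincide, which makes the root an invariant of exact duplications.
-/
lemma _root_.List.getElem?_take_append_replicate_append_drop {α : Type*} (l : List α) (a : α)
    {i : ℕ} (hi : i ≤ l.length) (k j : ℕ) :
    (l.take i ++ replicate k a ++ l.drop i)[j]? =
      if j < i then l[j]? else if j < i + k then some a else l[j - k]? := by
  simp only [getElem?_append, length_append, length_take, length_replicate, getElem?_take,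
    getElem?_replicate, getElem?_drop, Nat.min_eq_left hi]
  split_ifs <;> first | rfl | omega | (congr 1; omega)

lemma dup_of_le {i k : ℕ} {x : List (ZMod q)} (h : i + k ≤ x.length) :
    dup i k x = x.take (i + k) ++ x.drop i := by
  rw [dup, if_pos h, take_add, append_assoc]

lemma length_dup {i k : ℕ} {x : List (ZMod q)} (h : i + k ≤ x.length) :
    (dup i k x).length = x.length + k := by
  simp only [dup_of_le h, length_append, length_take, length_drop]
  omega

lemma getD_dup {i k : ℕ} {x : List (ZMod q)} (h : i + k ≤ x.length) (j : ℕ) :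
    (dup i k x).getD j 0 = if j < i + k then x.getD j 0 else x.getD (j - k) 0 := by
  simp only [dup_of_le h, getD_eq_getElem?_getD, getElem?_append, length_take, getElem?_take,
    getElem?_drop, Nat.min_eq_left h]
  split_ifs <;> first | rfl | omega | (congr 2; omega)

lemma hatPhi_dup (i k : ℕ) (x : List (ZMod q)) : hatPhi k (dup i k x) = hatPhi k x := by
  by_cases h : i + k ≤ x.length
  · rw [hatPhi, hatPhi, dup_of_le h, take_append_of_le_length (by simp; omega), take_take,
      Nat.min_eq_left (by omega)]
  · rw [dup, if_neg h]

lemma getElem?_barPhi (k : ℕ) (x : List (ZMod q)) (j : ℕ) :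
    (barPhi k x)[j]? =
      if j < x.length - k then some (x.getD (j + k) 0 - x.getD j 0) else none := by
  simp only [barPhi, getElem?_map]
  split_ifs with hj <;> simp [hj]

lemma length_barPhi (k : ℕ) (x : List (ZMod q)) : (barPhi k x).length = x.length - k := by
  simp [barPhi]

lemma barPhi_dup {i k : ℕ} {x : List (ZMod q)} (h : i + k ≤ x.length) :
    barPhi k (dup i k x) =
      (barPhi k x).take i ++ replicate k 0 ++ (barPhi k x).drop i := by
  ext1 j
  rw [getElem?_take_append_replicate_append_drop _ _ (by rw [length_barPhi]; omega),
    getElem?_barPhi, getElem?_barPhi, getElem?_barPhi, length_dup h, getD_dup h, getD_dup h]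
  split_ifs <;>
    first | omega | (simp_all; done) | simp_all [Nat.sub_add_cancel (show k ≤ j by omega)]

lemma muAux_add_self (k : ℕ) (z : List (ZMod q)) (cnt : ℕ) :
    muAux k (cnt + k) z = muAux k cnt z := by
  induction z generalizing cnt with
  | nil => simp [muAux]
  | cons a t ih =>
    by_cases ha : a = 0
    · simp only [muAux, if_pos ha, Nat.add_right_comm cnt k 1, ih]
    · simp only [muAux, if_neg ha, Nat.add_mod_right]

lemma muAux_replicate_zero_append (k m : ℕ) (z : List (ZMod q)) (cnt : ℕ) :
    muAux k cnt (replicate m 0 ++ z) = muAux k (cnt + m) z := by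
  induction m generalizing cnt with
  | zero => rfl
  | succ m ih =>
    simp only [replicate_succ, cons_append, muAux, if_true, ih, Nat.add_right_comm, Nat.add_assoc]

lemma muAux_insert_replicate_zero (k : ℕ) (u v : List (ZMod q)) (cnt : ℕ) :
    muAux k cnt (u ++ replicate k 0 ++ v) = muAux k cnt (u ++ v) := by
  induction u generalizing cnt with
  | nil => rw [nil_append, nil_append, muAux_replicate_zero_append, muAux_add_self]
  | cons a t ih =>
    by_cases ha : a = 0
    · simp only [cons_append, muAux, if_pos ha, ih]
    · simp only [cons_append, muAux, if_neg ha, ih]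

lemma mu_insert_replicate_zero (k : ℕ) (u v : List (ZMod q)) :
    mu k (u ++ replicate k 0 ++ v) = mu k (u ++ v) :=
  muAux_insert_replicate_zero k u v 0

lemma mu_barPhi_dup (i k : ℕ) (x : List (ZMod q)) :
    mu k (barPhi k (dup i k x)) = mu k (barPhi k x) := by
  by_cases h : i + k ≤ x.length
  · rw [barPhi_dup h, mu_insert_replicate_zero, take_append_drop]
  · rw [dup, if_neg h]

lemma ExactDesc.eq_of_dup_invariant {β : Type*} {k : ℕ} (f : List (ZMod q) → β)
    (hf : ∀ i x, f (dup i k x) = f x) {x y : List (ZMod q)} (h : ExactDesc k x y) :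
    f y = f x := by
  induction h with
  | refl => rfl
  | tail _ hstep ih =>
    obtain ⟨i, -, rfl⟩ := hstep
    rw [hf, ih]

lemma muAux_eq_of_not_infix {k : ℕ} (hk : 0 < k) (z : List (ZMod q)) {cnt : ℕ} (hcnt : cnt < k)
    (hz : ¬ replicate k (0 : ZMod q) <:+: replicate cnt 0 ++ z) :
    muAux k cnt z = replicate cnt 0 ++ z := by
  induction z generalizing cnt with
  | nil => simp [muAux, Nat.mod_eq_of_lt hcnt]
  | cons a t ih =>
    by_cases ha : a = 0
    · subst ha
      have hshift : replicate cnt (0 : ZMod q) ++ 0 :: t = replicate (cnt + 1) 0 ++ t := by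
        simp [replicate_succ']
      rw [hshift] at hz ⊢
      have hcnt' : cnt + 1 < k := by
        refine lt_of_le_of_ne hcnt fun hk' => hz ?_
        rw [hk']
        exact (prefix_append _ _).isInfix
      rw [muAux, if_pos rfl, ih hcnt' hz]
    · have ht : ¬ replicate k (0 : ZMod q) <:+: replicate 0 0 ++ t :=
        fun h => hz (h.trans ((suffix_cons a t).trans (suffix_append _ _)).isInfix)
      rw [muAux, if_neg ha, Nat.mod_eq_of_lt hcnt, ih hk ht]
      rfl

lemma hasRepeat_of_replicate_infix_barPhi {k : ℕ} {z : List (ZMod q)}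
    (h : replicate k (0 : ZMod q) <:+: barPhi k z) : HasRepeat k z := by
  obtain ⟨s, t, hst⟩ := h
  have hlen := congrArg length hst
  simp only [length_append, length_replicate, length_barPhi] at hlen
  have hperiodic : ∀ m < k, z.getD (s.length + m + k) 0 = z.getD (s.length + m) 0 := by
    intro m hm
    have hzero : (barPhi k z)[s.length + m]? = some 0 := by
      rw [← hst, getElem?_append_left (by simp; omega), getElem?_append_right (by omega)]
      simp [hm]
    rw [getElem?_barPhi, if_pos (by omega)] at hzero
    exact sub_eq_zero.mp (Option.some.inj hzero)
  refine ⟨s.length, by omega, ext_getElem? fun m => ?_⟩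
  simp only [getElem?_take, getElem?_drop]
  split_ifs with hm
  · have hper := hperiodic m hm
    simp only [getD_eq_getElem?_getD] at hper
    rw [getElem?_eq_getElem (by omega), getElem?_eq_getElem (by omega)] at hper ⊢
    simpa [Nat.add_right_comm] using hper.symm
  · rfl

lemma mu_barPhi_of_isIrreducible {k : ℕ} (hk : 0 < k) {z : List (ZMod q)}
    (hz : IsIrreducible k z) : mu k (barPhi k z) = barPhi k z :=
  muAux_eq_of_not_infix hk _ hk fun h => hz (hasRepeat_of_replicate_infix_barPhi h)

lemma eq_of_hatPhi_eq_of_barPhi_eq {k : ℕ} (hk : 0 < k) {z w : List (ZMod q)}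
    (hhat : hatPhi k z = hatPhi k w) (hbar : barPhi k z = barPhi k w) : z = w := by
  have hlen : z.length = w.length := by
    have h1 := congrArg length hhat
    have h2 := congrArg length hbar
    simp only [hatPhi, length_take, length_barPhi] at h1 h2
    omega
  have hget : ∀ j, z.getD j 0 = w.getD j 0 := by
    intro j
    induction j using Nat.strong_induction_on with
    | _ j ih =>
      rcases lt_or_ge j k with hjk | hjk
      · have hprefix := congrArg (·[j]?) hhat
        simp only [hatPhi, getElem?_take, if_pos hjk] at hprefix
        rw [getD_eq_getElem?_getD, getD_eq_getElem?_getD, hprefix]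
      rcases lt_or_ge j z.length with hj | hj
      · have hdiff := congrArg (·[j - k]?) hbar
        simpa only [getElem?_barPhi, hlen, if_pos (show j - k < w.length - k by omega),
          Nat.sub_add_cancel hjk, ih (j - k) (by omega), Option.some.injEq, sub_left_inj]
          using hdiff
      · rw [getD_eq_default _ _ hj, getD_eq_default _ _ (by omega)]
  exact ext_getElem hlen fun j hz hw => by
    rw [← getD_eq_getElem z 0 hz, ← getD_eq_getElem w 0 hw, hget]

lemma exactStep_of_hasRepeat {k : ℕ} {x : List (ZMod q)} (h : HasRepeat k x) :
    ∃ y : List (ZMod q), y.length + k = x.length ∧ ExactStep k y x := by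
  obtain ⟨i, hlen, hrep⟩ := h
  refine ⟨x.take (i + k) ++ x.drop (i + 2 * k), by simp; omega, i, by simp; omega, ?_⟩
  rw [dup_of_le (by simp; omega), take_append_of_le_length (by simp; omega), take_take,
    Nat.min_self, drop_append_of_le_length (by simp; omega), drop_take, Nat.add_sub_cancel_left,
    hrep, show i + 2 * k = i + k + k by omega, ← drop_drop (i := k) (j := i + k),
    take_append_drop, take_append_drop]

lemma ExactDesc.hatPhi_eq {k : ℕ} {x y : List (ZMod q)} (h : ExactDesc k x y) :
    hatPhi k y = hatPhi k x :=
  h.eq_of_dup_invariant (hatPhi k) (hatPhi_dup · k)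

lemma ExactDesc.mu_barPhi_eq {k : ℕ} {x y : List (ZMod q)} (h : ExactDesc k x y) :
    mu k (barPhi k y) = mu k (barPhi k x) :=
  h.eq_of_dup_invariant (fun z => mu k (barPhi k z)) (mu_barPhi_dup · k)

lemma exists_isIrreducible_exactDesc {k : ℕ} (hk : 0 < k) (x : List (ZMod q)) :
    ∃ z, IsIrreducible k z ∧ ExactDesc k z x := by
  induction hn : x.length using Nat.strong_induction_on generalizing x with
  | _ n ih =>
    by_cases hx : IsIrreducible k x
    · exact ⟨x, hx, .refl⟩
    obtain ⟨y, hy, hstep⟩ := exactStep_of_hasRepeat (not_not.mp hx)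
    obtain ⟨z, hz, hzy⟩ := ih y.length (by omega) y rfl
    exact ⟨z, hz, hzy.tail hstep⟩

lemma rt_spec {k : ℕ} (hk : 0 < k) (x : List (ZMod q)) :
    IsIrreducible k (rt k x) ∧ ExactDesc k (rt k x) x := by
  have h := exists_isIrreducible_exactDesc hk x
  rw [rt, dif_pos h]
  exact h.choose_spec

lemma eq_of_isIrreducible_of_exactDesc {k : ℕ} (hk : 0 < k) {z w x : List (ZMod q)}
    (hz : IsIrreducible k z) (hw : IsIrreducible k w) (hzx : ExactDesc k z x)
    (hwx : ExactDesc k w x) : z = w := by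
  have hmu : mu k (barPhi k z) = mu k (barPhi k w) := by
    rw [← hzx.mu_barPhi_eq, hwx.mu_barPhi_eq]
  refine eq_of_hatPhi_eq_of_barPhi_eq hk ?_ ?_
  · rw [← hzx.hatPhi_eq, hwx.hatPhi_eq]
  · rwa [mu_barPhi_of_isIrreducible hk hz, mu_barPhi_of_isIrreducible hk hw] at hmu

lemma ExactDesc.rt_eq {k : ℕ} (hk : 0 < k) {x y : List (ZMod q)} (h : ExactDesc k x y) :
    rt k y = rt k x :=
  eq_of_isIrreducible_of_exactDesc hk (rt_spec hk y).1 (rt_spec hk x).1 (rt_spec hk y).2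
    ((rt_spec hk x).2.trans h)

theorem exact_duplication_transform_general
    (q k n : ℕ) (hk : 1 ≤ k) (hn : k ≤ n)
    (x : List (ZMod q)) (hx : x.length = n) (i : ℕ) (hi : i ≤ n - k) :
    hatPhi k (dup i k x) = hatPhi k x ∧
    barPhi k (dup i k x) =
      (barPhi k x).take i ++ List.replicate k 0 ++ (barPhi k x).drop i ∧
    mu k (barPhi k (dup i k x)) = mu k (barPhi k x) ∧
    rt k (dup i k x) = rt k x ∧
    ∀ x' : List (ZMod q), ExactDesc k x x' →
      hatPhi k x' = hatPhi k x ∧ mu k (barPhi k x') = mu k (barPhi k x) ∧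
      rt k x' = rt k x := by
  have hik : i + k ≤ x.length := by omega
  have hdesc : ∀ x' : List (ZMod q), ExactDesc k x x' →
      hatPhi k x' = hatPhi k x ∧ mu k (barPhi k x') = mu k (barPhi k x) ∧
      rt k x' = rt k x := fun x' h =>
    ⟨h.hatPhi_eq, h.mu_barPhi_eq, h.rt_eq hk⟩
  obtain ⟨hhat, hmu, hrt⟩ := hdesc _ (.single ⟨i, hik, rfl⟩)
  exact ⟨hhat, barPhi_dup hik, hmu, hrt, hdesc⟩

/-- an exact `k`-TD leaves `φ̂` unchanged and inserts a block
`0^k` into `φ̄` after position `i`; hence `μ(φ̄(·))` and the duplication root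
are invariant under exact duplications. -/
theorem exact_duplication_transform
    (q k n : ℕ) (hq : 2 ≤ q) (hk : 1 ≤ k) (hn : k ≤ n)
    (x : List (ZMod q)) (hx : x.length = n) (i : ℕ) (hi : i ≤ n - k) :
    hatPhi k (dup i k x) = hatPhi k x ∧
    barPhi k (dup i k x) =
      (barPhi k x).take i ++ List.replicate k 0 ++ (barPhi k x).drop i ∧
    mu k (barPhi k (dup i k x)) = mu k (barPhi k x) ∧
    rt k (dup i k x) = rt k x ∧
    ∀ x' : List (ZMod q), ExactDesc k x x' →
      hatPhi k x' = hatPhi k x ∧ mu k (barPhi k x') = mu k (barPhi k x) ∧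
      rt k x' = rt k x :=
  exact_duplication_transform_general q k n hk hn x hx i hi

end NoisyDup
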